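/- In a unique guarded fixpoint category (C, ▷), the dagger satisfies the simplified composition identity: for all f : ▷X × Y → Z and g : Z → X, (g ∘ f)† = g ∘ (f ∘ (▷g × id_Y))†. -/
import Mathlib

open CategoryTheory CategoryTheory.Limits

/-- In a unique guarded fixpoint category `(C, ▷)`, the dagger satisfies the simplified
composition identity: for `f : ▷X × Y → Z` and `g : Z → X`,
`(g ∘ f)† = g ∘ (f ∘ (▷g × id_Y))†`. -/
theorem stmt6 {C : Type*} [Category C] [HasFiniteProducts C]
    (F : C ⥤ C) (p : 𝟭 C ⟶ F)
    (dag : ∀ {X Y : C}, (F.obj X ⨯ Y ⟶ X) → (Y ⟶ X))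
    (hfix : ∀ {X Y : C} (f : F.obj X ⨯ Y ⟶ X),
      dag f = prod.lift (dag f) (𝟙 Y) ≫ prod.map (p.app X) (𝟙 Y) ≫ f)
    (huniq : ∀ {X Y : C} (f : F.obj X ⨯ Y ⟶ X) (s : Y ⟶ X),
      s = prod.lift s (𝟙 Y) ≫ prod.map (p.app X) (𝟙 Y) ≫ f → s = dag f) :
    ∀ {X Y Z : C} (f : F.obj X ⨯ Y ⟶ Z) (g : Z ⟶ X),
      dag (f ≫ g) = dag (prod.map (F.map g) (𝟙 Y) ≫ f) ≫ g := by
  intro X Y Z f g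
  symm
  apply huniq
  conv_lhs => rw [hfix (prod.map (F.map g) (𝟙 Y) ≫ f)]
  have hnat : g ≫ p.app X = p.app Z ≫ F.map g := by
    simpa using p.naturality g
  set t := dag (prod.map (F.map g) (𝟙 Y) ≫ f)
  have key : prod.lift (t ≫ g) (𝟙 Y) ≫ prod.map (p.app X) (𝟙 Y)
      = prod.lift (t ≫ p.app Z) (𝟙 Y) ≫ prod.map (F.map g) (𝟙 Y) := by
    ext <;> simp [hnat]
  rw [← Category.assoc _ (prod.map (p.app X) (𝟙 Y)), key]
  simp
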